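/- Let (M,d) be a compact metric space and let E be a compact subset of M^ℤ for the metric d_1. Then the set of maps φ : E → ℝ^k that are both continuous for d_1 and Lipschitz for d_∞ is dense, for the uniform norm, in the space of all d_1-continuous maps E → ℝ^k. -/

import Mathlib

open Filter

/-- The metric `d₁` on `M^ℤ`: `d₁(x,y) = Σ_{n ∈ ℤ} d(x_n, y_n) / 2^{|n|}`. -/
noncomputable def d1 {M : Type*} [PseudoMetricSpace M] (x y : ℤ → M) : ℝ :=
  ∑' n : ℤ, dist (x n) (y n) / 2 ^ n.natAbs

/-- The metric `d_∞` on `M^ℤ`: `d_∞(x,y) = sup_{n ∈ ℤ} d(x_n, y_n)`. -/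
noncomputable def dInfty {M : Type*} [PseudoMetricSpace M] (x y : ℤ → M) : ℝ :=
  ⨆ n : ℤ, dist (x n) (y n)

/-- `E ⊆ M^ℤ` is compact for the metric `d₁` (expressed through sequential compactness,
which is equivalent to compactness in metric spaces). -/
def IsD1Compact {M : Type*} [PseudoMetricSpace M] (E : Set (ℤ → M)) : Prop :=
  ∀ u : ℕ → (ℤ → M), (∀ n, u n ∈ E) → ∃ x ∈ E, ∃ σ : ℕ → ℕ, StrictMono σ ∧
    Tendsto (fun n => d1 x (u (σ n))) atTop (nhds 0)

/-!
Since `d1 ≤ 3 * dInfty`, a `d1`-Lipschitz map is `dInfty`-Lipschitz, so it suffices to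
approximate `φ` uniformly on `E` by `d1`-Lipschitz maps. For the pseudometric `d1`, the set `E`
is compact, hence every coordinate `φᵢ` is uniformly continuous and bounded on `E`. Its
inf-convolution `x ↦ inf_{y ∈ E} (φᵢ y + K * d1 x y)` is `K`-Lipschitz, lies below `φᵢ` on `E`,
and lies above `φᵢ - ε` on `E` as soon as `K * δ` exceeds the oscillation of `φᵢ`, where `δ` is
a modulus of uniform continuity for `ε`.
-/

open Metric Set Bornology
open scoped NNReal ENNReal

theorem hasSum_div_two_pow_natAbs (c : ℝ) : HasSum (fun n : ℤ => c / 2 ^ n.natAbs) (3 * c) := by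
  have hpos : HasSum (fun n : ℕ => c / 2 ^ n) (2 * c) := by
    convert hasSum_geometric_two' (2 * c) using 2; ring
  have hneg : HasSum (fun n : ℕ => c / 2 ^ (n + 1)) c := by
    convert hasSum_geometric_two' c using 2; ring
  convert hpos.of_nat_of_neg_add_one (f := fun n : ℤ => c / 2 ^ n.natAbs) ?_ using 1
  · ring
  · convert hneg using 4; omega

section D1

variable {M : Type*} [PseudoMetricSpace M]

theorem d1_self (x : ℤ → M) : d1 x x = 0 := by
  simp [d1]

theorem d1_comm (x y : ℤ → M) : d1 x y = d1 y x := by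
  simp only [d1, dist_comm]

-- Without boundedness the series defining `d1` may diverge, and `tsum` then returns `0`.
variable [BoundedSpace M]

theorem summable_dist_div_two_pow_natAbs (x y : ℤ → M) :
    Summable fun n => dist (x n) (y n) / 2 ^ n.natAbs := by
  obtain ⟨C, hC⟩ := boundedSpace_iff.1 ‹BoundedSpace M›
  exact (hasSum_div_two_pow_natAbs C).summable.of_nonneg_of_le (fun n => by positivity)
    fun n => by gcongr; exact hC _ _

theorem d1_triangle (x y z : ℤ → M) : d1 x z ≤ d1 x y + d1 y z := by
  have hxy := summable_dist_div_two_pow_natAbs x y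
  have hyz := summable_dist_div_two_pow_natAbs y z
  rw [d1, d1, d1, ← hxy.tsum_add hyz]
  refine (summable_dist_div_two_pow_natAbs x z).tsum_le_tsum (fun n => ?_) (hxy.add hyz)
  rw [← add_div]
  gcongr
  exact dist_triangle _ _ _

theorem dist_le_dInfty (x y : ℤ → M) (n : ℤ) : dist (x n) (y n) ≤ dInfty x y := by
  obtain ⟨C, hC⟩ := boundedSpace_iff.1 ‹BoundedSpace M›
  exact le_ciSup ⟨C, forall_mem_range.2 fun m => hC _ _⟩ n

theorem d1_le_three_mul_dInfty (x y : ℤ → M) : d1 x y ≤ 3 * dInfty x y :=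
  hasSum_le (fun n => by gcongr; exact dist_le_dInfty x y n)
    (summable_dist_div_two_pow_natAbs x y).hasSum (hasSum_div_two_pow_natAbs _)

end D1

/-- `ℤ → M` with the pseudometric `d1`; a separate type, since `ℤ → M` carries the product
topology. -/
def WithD1 (M : Type*) := ℤ → M

namespace WithD1

def equiv (M : Type*) : WithD1 M ≃ (ℤ → M) := Equiv.refl _

variable {M : Type*} [PseudoMetricSpace M] [BoundedSpace M]

noncomputable instance : PseudoMetricSpace (WithD1 M) where
  dist x y := d1 (equiv M x) (equiv M y)
  dist_self x := d1_self _
  dist_comm x y := d1_comm _ _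
  dist_triangle x y z := d1_triangle _ _ _

theorem dist_eq (x y : WithD1 M) : dist x y = d1 (equiv M x) (equiv M y) := rfl

theorem isCompact_preimage_equiv {E : Set (ℤ → M)} (hE : IsD1Compact E) :
    IsCompact (equiv M ⁻¹' E) := by
  refine IsSeqCompact.isCompact fun u hu => ?_
  obtain ⟨x, hx, σ, hσ, hlim⟩ := hE (equiv M ∘ u) hu
  refine ⟨(equiv M).symm x, by simpa using hx, σ, hσ, tendsto_iff_dist_tendsto_zero.2 ?_⟩
  simpa only [dist_eq, Function.comp_apply, Equiv.apply_symm_apply, d1_comm x] using hlim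

theorem continuousOn_comp_equiv_iff {β : Type*} [PseudoMetricSpace β] {f : (ℤ → M) → β}
    {E : Set (ℤ → M)} :
    ContinuousOn (f ∘ equiv M) (equiv M ⁻¹' E) ↔
      ∀ x ∈ E, ∀ ε : ℝ, 0 < ε → ∃ δ : ℝ, 0 < δ ∧
        ∀ y ∈ E, d1 x y < δ → dist (f y) (f x) < ε := by
  simp only [Metric.continuousOn_iff, (equiv M).forall_congr_left, dist_eq,
    Equiv.apply_symm_apply, mem_preimage, Function.comp_apply]
  refine forall₂_congr fun x _ => forall₂_congr fun ε _ => exists_congr fun δ =>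
    and_congr_right' <| forall₂_congr fun y _ => by rw [d1_comm]

end WithD1

section InfConvolution

variable {α : Type*} [PseudoMetricSpace α]

noncomputable def infConvolution (f : α → ℝ) (s : Set α) (K : ℝ≥0) (x : α) : ℝ :=
  ⨅ y : s, f y + K * dist x y

variable {f : α → ℝ} {s : Set α} {K : ℝ≥0}

theorem bddBelow_range_add_mul_dist (hf : BddBelow (f '' s)) (x : α) :
    BddBelow (range fun y : s => f y + K * dist x y) := by
  obtain ⟨m, hm⟩ := hf
  refine ⟨m, forall_mem_range.2 fun y => ?_⟩
  have hmy := hm (mem_image_of_mem f y.2)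
  have hpen : 0 ≤ (K : ℝ) * dist x y := by positivity
  linarith

theorem infConvolution_le (hf : BddBelow (f '' s)) {x : α} (hx : x ∈ s) :
    infConvolution f s K x ≤ f x := by
  calc infConvolution f s K x ≤ f x + K * dist x x :=
        ciInf_le (bddBelow_range_add_mul_dist hf x) ⟨x, hx⟩
    _ = f x := by simp

theorem le_infConvolution [Nonempty s] {c : ℝ} {x : α}
    (h : ∀ y ∈ s, c ≤ f y + K * dist x y) :
    c ≤ infConvolution f s K x :=
  le_ciInf fun y => h y y.2

theorem lipschitzWith_infConvolution (hf : BddBelow (f '' s)) :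
    LipschitzWith K (infConvolution f s K) := by
  rcases s.eq_empty_or_nonempty with rfl | hs
  · convert LipschitzWith.const' (0 : ℝ) (K := K)
    exact Real.iInf_of_isEmpty _
  have : Nonempty s := hs.to_subtype
  refine LipschitzWith.of_le_add_mul K fun x y => ?_
  rw [← sub_le_iff_le_add]
  refine le_infConvolution fun z hz => ?_
  have hx : infConvolution f s K x ≤ f z + K * dist x z :=
    ciInf_le (bddBelow_range_add_mul_dist hf x) ⟨z, hz⟩
  have htri : (K : ℝ) * dist x z ≤ K * dist x y + K * dist y z := by
    rw [← mul_add]; gcongr; exact dist_triangle x y z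
  linarith

end InfConvolution

section LipschitzApproximation

variable {α : Type*} [PseudoMetricSpace α] {s : Set α} {ε : ℝ}

theorem UniformContinuousOn.exists_lipschitzWith_dist_le {f : α → ℝ}
    (hf : UniformContinuousOn f s) (hb : IsBounded (f '' s)) (hε : 0 < ε) :
    ∃ (K : ℝ≥0) (g : α → ℝ), LipschitzWith K g ∧ ∀ x ∈ s, dist (g x) (f x) ≤ ε := by
  rcases s.eq_empty_or_nonempty with rfl | hs
  · exact ⟨0, 0, LipschitzWith.const' 0, by simp⟩
  have : Nonempty s := hs.to_subtype
  obtain ⟨δ, hδ, hfδ⟩ := Metric.uniformContinuousOn_iff.1 hf ε hε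
  obtain ⟨C, hC⟩ := isBounded_iff.1 hb
  set K := (C / δ).toNNReal
  have hCK : C ≤ K * δ := (div_le_iff₀ hδ).1 (Real.le_coe_toNNReal _)
  have hkey : ∀ x ∈ s, ∀ y ∈ s, f x - ε ≤ f y + K * dist x y := by
    intro x hx y hy
    rcases lt_or_ge (dist x y) δ with hxy | hxy
    · have hclose : f x - f y < ε := (abs_sub_lt_iff.1 (hfδ x hx y hy hxy)).1
      have hpen : 0 ≤ (K : ℝ) * dist x y := by positivity
      linarith
    · have hosc : f x - f y ≤ C :=
        (le_abs_self _).trans (hC (mem_image_of_mem f hx) (mem_image_of_mem f hy))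
      have hpen : (K : ℝ) * δ ≤ K * dist x y := by gcongr
      linarith
  refine ⟨K, infConvolution f s K, lipschitzWith_infConvolution hb.bddBelow, fun x hx => ?_⟩
  rw [Real.dist_eq, abs_sub_le_iff]
  have hle := infConvolution_le (K := K) hb.bddBelow hx
  have hge := le_infConvolution (hkey x hx)
  constructor <;> linarith

theorem IsCompact.exists_lipschitzWith_dist_le_pi {ι : Type*} [Fintype ι] {f : α → ι → ℝ}
    (hs : IsCompact s) (hf : ContinuousOn f s) (hε : 0 < ε) :
    ∃ (K : ℝ≥0) (g : α → ι → ℝ), LipschitzWith K g ∧ ∀ x ∈ s, dist (g x) (f x) ≤ ε := by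
  have hcoord : ∀ i, ∃ (K : ℝ≥0) (g : α → ℝ), LipschitzWith K g ∧
      ∀ x ∈ s, dist (g x) (f x i) ≤ ε := fun i => by
    have hfi : ContinuousOn (fun x => f x i) s := (continuous_apply i).comp_continuousOn hf
    exact (hs.uniformContinuousOn_of_continuous hfi).exists_lipschitzWith_dist_le
      (hs.image_of_continuousOn hfi).isBounded hε
  choose K g hg hgf using hcoord
  refine ⟨Finset.univ.sup K, fun x i => g i x, LipschitzWith.of_dist_le_mul fun x y => ?_,
    fun x hx => (dist_pi_le_iff hε.le).2 fun i => hgf i x hx⟩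
  refine (dist_pi_le_iff (by positivity)).2 fun i => ((hg i).dist_le_mul x y).trans ?_
  gcongr
  exact Finset.le_sup (Finset.mem_univ i)

theorem IsCompact.exists_lipschitzWith_dist_le_piLp {p : ℝ≥0∞} [Fact (1 ≤ p)] {ι : Type*}
    [Fintype ι] {f : α → PiLp p fun _ : ι => ℝ} (hs : IsCompact s) (hf : ContinuousOn f s)
    (hε : 0 < ε) :
    ∃ (K : ℝ≥0) (g : α → PiLp p fun _ : ι => ℝ), LipschitzWith K g ∧
      ∀ x ∈ s, dist (g x) (f x) ≤ ε := by
  have htoLp := PiLp.lipschitzWith_toLp p fun _ : ι => ℝ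
  set L := (Fintype.card ι : ℝ≥0) ^ (1 / p).toReal
  obtain ⟨K, g, hg, hgf⟩ := hs.exists_lipschitzWith_dist_le_pi
    ((PiLp.continuous_ofLp p _).comp_continuousOn hf) (ε := ε / (L + 1)) (by positivity)
  refine ⟨L * K, WithLp.toLp p ∘ g, htoLp.comp hg, fun x hx => ?_⟩
  calc dist (WithLp.toLp p (g x)) (f x)
      = dist (WithLp.toLp p (g x)) (WithLp.toLp p (WithLp.ofLp (f x))) := by
        rw [WithLp.toLp_ofLp]
    _ ≤ L * dist (g x) (WithLp.ofLp (f x)) := htoLp.dist_le_mul _ _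
    _ ≤ (L + 1) * (ε / (L + 1)) := by
        gcongr
        exacts [le_add_of_nonneg_right zero_le_one, hgf x hx]
    _ = ε := mul_div_cancel₀ _ (by positivity)

end LipschitzApproximation

/-- Let `(M,d)` be a compact metric space and `E ⊆ M^ℤ` compact for `d₁`.
The maps `E → ℝ^k` that are both `d₁`-continuous and `d_∞`-Lipschitz are dense, for the
uniform norm, among all `d₁`-continuous maps `E → ℝ^k`. -/
theorem dense_d1_continuous_dInfty_lipschitz
    {M : Type*} [MetricSpace M] [CompactSpace M] (E : Set (ℤ → M)) (hE : IsD1Compact E)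
    (k : ℕ) (φ : (ℤ → M) → EuclideanSpace ℝ (Fin k))
    (hφ : ∀ x ∈ E, ∀ ε : ℝ, 0 < ε → ∃ δ : ℝ, 0 < δ ∧
      ∀ y ∈ E, d1 x y < δ → ‖φ y - φ x‖ < ε)
    (ε : ℝ) (hε : 0 < ε) :
    ∃ ψ : (ℤ → M) → EuclideanSpace ℝ (Fin k),
      (∀ x ∈ E, ∀ ε' : ℝ, 0 < ε' → ∃ δ : ℝ, 0 < δ ∧
        ∀ y ∈ E, d1 x y < δ → ‖ψ y - ψ x‖ < ε') ∧
      (∃ Λ : ℝ, ∀ x ∈ E, ∀ y ∈ E, ‖ψ x - ψ y‖ ≤ Λ * dInfty x y) ∧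
      (∀ x ∈ E, ‖ψ x - φ x‖ ≤ ε) := by
  have hφc : ContinuousOn (φ ∘ WithD1.equiv M) (WithD1.equiv M ⁻¹' E) :=
    WithD1.continuousOn_comp_equiv_iff.2 (by simpa only [dist_eq_norm] using hφ)
  obtain ⟨K, g, hg, hgφ⟩ :=
    (WithD1.isCompact_preimage_equiv hE).exists_lipschitzWith_dist_le_piLp hφc hε
  set ψ := g ∘ (WithD1.equiv M).symm
  refine ⟨ψ, ?_, ⟨3 * K, fun x _ y _ => ?_⟩, fun x hx => ?_⟩
  · have hψg : ψ ∘ WithD1.equiv M = g := by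
      rw [Function.comp_assoc, Equiv.symm_comp_self, Function.comp_id]
    have hψc : ContinuousOn (ψ ∘ WithD1.equiv M) (WithD1.equiv M ⁻¹' E) :=
      hψg ▸ hg.continuous.continuousOn
    simpa only [dist_eq_norm] using WithD1.continuousOn_comp_equiv_iff.1 hψc
  · rw [← dist_eq_norm]
    calc dist (ψ x) (ψ y) ≤ K * d1 x y := hg.dist_le_mul _ _
      _ ≤ K * (3 * dInfty x y) := by gcongr; exact d1_le_three_mul_dInfty x y
      _ = 3 * K * dInfty x y := by ring
  · rw [← dist_eq_norm]
    simpa [ψ] using hgφ ((WithD1.equiv M).symm x) (by simpa using hx)
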